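/- (Leave-one-out weights.) Let n ≥ 2, let I be a uniform random subset of {1,…,n} of cardinality n−1, and set W_i := (n/(n−1))·1_{i∈I}. Then for any subset Λ ⊆ {1,…,n} with card(Λ) = m ≥ 2, any i ∈ Λ, and W̄ := m^{−1} Σ_{j∈Λ} W_j, one has W̄ > 0 almost surely and E[(W_i − W̄)²/W̄] = 1/(n−1). -/

import Mathlib

/-!
A subset of `Fin n` of size `n - 1` is `{k}ᶜ` for a unique `k`, so `I` is a uniformly chosen
deleted index `k` and `W_j = c · 1_{j ≠ k}` with `c = n / (n - 1)`. If `k ∉ Λ`, all weights on `Λ`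
equal `c` and the integrand vanishes. If `k ∈ Λ`, the mean is `(m - 1) c / m` whatever `k` is, and
summing the squared deviations of `W_i` over `k ∈ Λ` gives `c² (m - 1) / m`; hence the sum of the
integrand over `k` is `c`, and averaging over the `n` values of `k` gives `c / n = 1 / (n - 1)`.
-/

open MeasureTheory ProbabilityTheory Finset

instance {α : Type*} : MeasurableSpace (Finset α) := ⊤

noncomputable def unifM (α : Type*) [Fintype α] [MeasurableSpace α] : Measure α :=
  (Fintype.card α : ENNReal)⁻¹ • Measure.count

noncomputable def looW (n : ℕ) (i : Fin n) (I : {t : Finset (Fin n) // t.card = n - 1}) : ℝ :=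
  if i ∈ I.1 then (n : ℝ) / (n - 1) else 0

theorem integral_unifM {α : Type*} [Fintype α] [MeasurableSpace α] [MeasurableSingletonClass α]
    (f : α → ℝ) : ∫ x, f x ∂unifM α = (Fintype.card α : ℝ)⁻¹ * ∑ x, f x := by
  rw [unifM, integral_smul_measure, integral_count, ENNReal.toReal_inv, ENNReal.toReal_natCast,
    smul_eq_mul]

namespace Finset

variable {α : Type*} [Fintype α] [DecidableEq α] {k : ℕ}

theorem card_compl_singleton_eq (hk : Fintype.card α = k + 1) (a : α) :
    ({a}ᶜ : Finset α).card = k := by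
  rw [card_compl, card_singleton, hk, Nat.add_sub_cancel]

theorem exists_eq_compl_singleton (hk : Fintype.card α = k + 1) {t : Finset α} (ht : t.card = k) :
    ∃ a, t = {a}ᶜ := by
  obtain ⟨a, ha⟩ := card_eq_one.mp (show tᶜ.card = 1 by rw [card_compl, ht, hk]; omega)
  exact ⟨a, by rw [← ha, compl_compl]⟩

noncomputable def complSingletonEquiv (hk : Fintype.card α = k + 1) :
    α ≃ {t : Finset α // t.card = k} :=
  Equiv.ofBijective (fun a => ⟨{a}ᶜ, card_compl_singleton_eq hk a⟩)
    ⟨fun _ _ hab => singleton_injective (compl_injective (congrArg Subtype.val hab)),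
      fun t => (exists_eq_compl_singleton hk t.2).imp fun _ ha => Subtype.ext ha.symm⟩

@[simp]
theorem complSingletonEquiv_apply_coe (hk : Fintype.card α = k + 1) (a : α) :
    (complSingletonEquiv hk a : Finset α) = {a}ᶜ := rfl

end Finset

theorem sum_ite_sq_sub_div_eq {ι : Type*} [DecidableEq ι] {s : Finset ι} {i : ι} (hi : i ∈ s)
    (hs : 2 ≤ s.card) {c : ℝ} (hc : c ≠ 0) :
    ∑ k ∈ s, ((if i = k then 0 else c) - (s.card - 1) * c / s.card) ^ 2 /
      ((s.card - 1) * c / s.card) = c := by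
  have hs' : (2 : ℝ) ≤ s.card := by exact_mod_cast hs
  have hs1 : (s.card : ℝ) - 1 ≠ 0 := by linarith
  rw [← add_sum_erase s _ hi, if_pos rfl,
    sum_congr rfl fun k hk => by rw [if_neg (ne_of_mem_erase hk).symm], sum_const,
    card_erase_of_mem hi, nsmul_eq_mul, Nat.cast_pred (by omega)]
  field_simp
  ring

theorem looW_complSingletonEquiv {n : ℕ} (hn : Fintype.card (Fin n) = n - 1 + 1) (j k : Fin n) :
    looW n j (complSingletonEquiv hn k) = if j = k then 0 else (n : ℝ) / (n - 1) := by
  by_cases h : j = k <;> simp [looW, h]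

theorem sum_looW_complSingletonEquiv {n : ℕ} (hn : Fintype.card (Fin n) = n - 1 + 1)
    (Λ : Finset (Fin n)) (k : Fin n) :
    ∑ j ∈ Λ, looW n j (complSingletonEquiv hn k) =
      Λ.card * ((n : ℝ) / (n - 1)) - if k ∈ Λ then (n : ℝ) / (n - 1) else 0 := by
  have h (j : Fin n) : looW n j (complSingletonEquiv hn k) =
      (n : ℝ) / (n - 1) - if j = k then (n : ℝ) / (n - 1) else 0 := by
    rw [looW_complSingletonEquiv]; split_ifs <;> ring
  simp_rw [h, sum_sub_distrib, sum_const, nsmul_eq_mul, sum_ite_eq']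

theorem mean_looW_complSingletonEquiv {n : ℕ} (hn : Fintype.card (Fin n) = n - 1 + 1)
    {Λ : Finset (Fin n)} (hΛ : Λ.Nonempty) (k : Fin n) :
    (∑ j ∈ Λ, looW n j (complSingletonEquiv hn k)) / Λ.card =
      if k ∈ Λ then (Λ.card - 1) * ((n : ℝ) / (n - 1)) / Λ.card else (n : ℝ) / (n - 1) := by
  have : (Λ.card : ℝ) ≠ 0 := by exact_mod_cast hΛ.card_pos.ne'
  rw [sum_looW_complSingletonEquiv]
  split_ifs
  · field_simp
  · rw [sub_zero, mul_div_cancel_left₀ _ this]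

theorem loo_R2_general (n : ℕ)
    (Λ : Finset (Fin n)) (m : ℕ) (hm : Λ.card = m) (hm2 : 2 ≤ m) (i : Fin n) (hi : i ∈ Λ) :
    (∀ᵐ I ∂(unifM {t : Finset (Fin n) // t.card = n - 1}),
        0 < (∑ j ∈ Λ, looW n j I) / m) ∧
      ∫ I, (looW n i I - (∑ j ∈ Λ, looW n j I) / m) ^ 2 / ((∑ j ∈ Λ, looW n j I) / m)
          ∂(unifM {t : Finset (Fin n) // t.card = n - 1}) =
        1 / ((n : ℝ) - 1) := by
  subst hm
  have hΛn : Λ.card ≤ n := by simpa using Λ.card_le_univ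
  have hn : Fintype.card (Fin n) = n - 1 + 1 := by rw [Fintype.card_fin]; omega
  have hn' : (2 : ℝ) ≤ n := by exact_mod_cast hm2.trans hΛn
  have hm' : (2 : ℝ) ≤ Λ.card := by exact_mod_cast hm2
  have hc : 0 < (n : ℝ) / (n - 1) := div_pos (by linarith) (by linarith)
  let e := complSingletonEquiv hn
  have hmean := mean_looW_complSingletonEquiv hn ⟨i, hi⟩
  refine ⟨.of_forall fun I => ?_, ?_⟩
  · obtain ⟨k, rfl⟩ := e.surjective I
    rw [hmean]
    split_ifs
    · exact div_pos (mul_pos (by linarith) hc) (by linarith)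
    · exact hc
  rw [integral_unifM, Fintype.card_congr e.symm, Fintype.card_fin, ← e.sum_comp,
    ← sum_add_sum_compl Λ,
    sum_congr rfl fun k hk => by rw [hmean, if_pos hk, looW_complSingletonEquiv],
    sum_ite_sq_sub_div_eq hi hm2 hc.ne',
    sum_eq_zero fun k hk => by
      have hk : k ∉ Λ := mem_compl.mp hk
      rw [hmean, if_neg hk, looW_complSingletonEquiv, if_neg (ne_of_mem_of_not_mem hi hk),
        sub_self, zero_pow two_ne_zero, zero_div],
    add_zero]
  field_simp

/-- **`R_{2,W}` for leave-one-out weights**: for `n ≥ 2`, any cell `Λ` of cardinality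
`m ≥ 2`, any `i ∈ Λ` and `W̄ = m⁻¹ Σ_{j∈Λ} W_j`, one has `W̄ > 0` almost surely and
`E[(W_i − W̄)²/W̄] = 1/(n−1)`. -/
theorem loo_R2 (n : ℕ) (hn : 2 ≤ n)
    (Λ : Finset (Fin n)) (m : ℕ) (hm : Λ.card = m) (hm2 : 2 ≤ m) (i : Fin n) (hi : i ∈ Λ) :
    (∀ᵐ I ∂(unifM {t : Finset (Fin n) // t.card = n - 1}),
        0 < (∑ j ∈ Λ, looW n j I) / m) ∧
      ∫ I, (looW n i I - (∑ j ∈ Λ, looW n j I) / m) ^ 2 / ((∑ j ∈ Λ, looW n j I) / m)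
          ∂(unifM {t : Finset (Fin n) // t.card = n - 1}) =
        1 / ((n : ℝ) - 1) :=
  loo_R2_general n Λ m hm hm2 i hi
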